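/- Path graph breakpoint: let G = P_{m+1} be the path graph on vertices 1,…,m+1 (edges (i,i+1)), m ≥ 2, with seed s = e_1 at endpoint 1 (so d_1 = d_{m+1} = 1 and d_i = 2 for 2 ≤ i ≤ m), α ∈ (0,1], and ρ₀ = (1−α)/(3+α). For any ρ with max(ρ₀, 0) < ρ < 1 (and also at ρ = ρ₀ when ρ₀ > 0), the unique minimizer x⋆ of F_ρ has support S⋆ = {1} with x_1⋆ = 2α(1−ρ)/(1+α). Moreover, the degree-normalized KKT slack at node 2 (where d_2 = 2 and λ_2 = αρ√2) equals γ_2 = (λ_2 − |∇_2 f(x⋆)|)/√2 = (α(3+α)/(2(1+α)))·(ρ − ρ₀); in particular at the breakpoint ρ = ρ₀ one has min_{i ∉ S⋆} γ_i = 0. -/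

import Mathlib

/-!
The candidate is `x = c·e₀` with `c = 2α(1-ρ)/(1+α)`, chosen so that `∇₀f(x) = -αρ`. Its
gradient at vertex `1` is `-(1-α)c/(2√2)`, whose size stays below `αρ√2` by exactly
`√2 · α(3+α)(ρ-ρ₀)/(2(1+α))`, and it vanishes beyond vertex `1`; so `x` is a KKT point iff
`ρ ≥ ρ₀`. Since the normalized adjacency matrix has spectral radius at most `1`,
`⟨u, Qu⟩ ≥ α‖u‖²`, and expanding `F_ρ` around a KKT point gives
`F_ρ(z) ≥ F_ρ(x) + (α/2)‖z - x‖²`; hence every minimizer equals `x`.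
-/

open Finset

noncomputable section

/-- Degree of vertex `i` in the (unweighted) graph with adjacency matrix `A`. -/
def deg {n : ℕ} (A : Matrix (Fin n) (Fin n) ℝ) (i : Fin n) : ℝ := ∑ j, A i j

/-- The PageRank matrix `Q = αI + ((1−α)/2)·𝓛 = ((1+α)/2)·I − ((1−α)/2)·D^{-1/2} A D^{-1/2}`. -/
def Qmat {n : ℕ} (A : Matrix (Fin n) (Fin n) ℝ) (α : ℝ) : Matrix (Fin n) (Fin n) ℝ :=
  fun i j => (if i = j then (1 + α) / 2 else 0)
    - ((1 - α) / 2) * A i j / (Real.sqrt (deg A i) * Real.sqrt (deg A j))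

/-- Smooth PageRank objective `f(x) = (1/2)⟨x, Qx⟩ − α⟨D^{-1/2} e_v, x⟩` with seed vertex `v`. -/
def fPR {n : ℕ} (A : Matrix (Fin n) (Fin n) ℝ) (α : ℝ) (v : Fin n) (x : Fin n → ℝ) : ℝ :=
  (1 / 2) * (∑ i, x i * (Qmat A α).mulVec x i) - α * (x v / Real.sqrt (deg A v))

/-- Gradient of `fPR`: `∇f(x) = Qx − α·D^{-1/2} e_v`. -/
def gradf {n : ℕ} (A : Matrix (Fin n) (Fin n) ℝ) (α : ℝ) (v : Fin n) (x : Fin n → ℝ) :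
    Fin n → ℝ :=
  fun i => (Qmat A α).mulVec x i - α * (if i = v then 1 / Real.sqrt (deg A v) else 0)

/-- Weighted ℓ1 norm `‖D^{1/2} x‖₁ = ∑ i, √(d i)·|x i|`. -/
def l1w {n : ℕ} (A : Matrix (Fin n) (Fin n) ℝ) (x : Fin n → ℝ) : ℝ :=
  ∑ i, Real.sqrt (deg A i) * |x i|

/-- ℓ1-regularized PageRank objective `F_ρ(x) = f(x) + αρ‖D^{1/2}x‖₁`. -/
def Freg {n : ℕ} (A : Matrix (Fin n) (Fin n) ℝ) (α : ℝ) (v : Fin n) (ρ : ℝ)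
    (x : Fin n → ℝ) : ℝ :=
  fPR A α v x + α * ρ * l1w A x

/-- Coordinatewise soft-thresholding at levels `t·√(d i)`: this is the proximal map
`prox_{ηg}` of `g(x) = cαρ‖D^{1/2}x‖₁` with `t = η·c·α·ρ`. -/
def softT {n : ℕ} (A : Matrix (Fin n) (Fin n) ℝ) (t : ℝ) (w : Fin n → ℝ) : Fin n → ℝ :=
  fun i => Real.sign (w i) * max (|w i| - t * Real.sqrt (deg A i)) 0

/-- Euclidean norm on `Fin n → ℝ`. -/
def enorm {n : ℕ} (x : Fin n → ℝ) : ℝ := Real.sqrt (∑ i, (x i) ^ 2)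

open Classical in
/-- Degree-weighted volume of a vertex set: `vol(S) = ∑_{i ∈ S} d i`. -/
def volS {n : ℕ} (A : Matrix (Fin n) (Fin n) ℝ) (S : Set (Fin n)) : ℝ :=
  ∑ i ∈ Finset.univ.filter (fun i => i ∈ S), deg A i

/-- Neighbor set of a vertex. -/
def nbr {n : ℕ} (A : Matrix (Fin n) (Fin n) ℝ) (i : Fin n) : Set (Fin n) := {j | A i j ≠ 0}

/-- Vertex boundary of `S`: vertices outside `S` with a neighbor in `S`. -/
def bdry {n : ℕ} (A : Matrix (Fin n) (Fin n) ℝ) (S : Set (Fin n)) : Set (Fin n) :=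
  {j | j ∉ S ∧ ∃ i ∈ S, A j i ≠ 0}

/-- `A` is the adjacency matrix of a finite undirected unweighted loopless graph
with all degrees positive. -/
structure IsGraph {n : ℕ} (A : Matrix (Fin n) (Fin n) ℝ) : Prop where
  symm : ∀ i j, A i j = A j i
  zero_one : ∀ i j, A i j = 0 ∨ A i j = 1
  loopless : ∀ i, A i i = 0
  deg_pos : ∀ i, 0 < deg A i

/-- Adjacency matrix of the path graph on `m+1` vertices `0,1,…,m` (edges between
consecutive vertices). Vertex `0` here is the paper's endpoint vertex `1`. -/
def pathA (m : ℕ) : Matrix (Fin (m + 1)) (Fin (m + 1)) ℝ :=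
  fun i j => if i.val + 1 = j.val ∨ j.val + 1 = i.val then 1 else 0

open Matrix


section Objective

variable {n : ℕ} {A : Matrix (Fin n) (Fin n) ℝ} {α ρ : ℝ} {v : Fin n}

lemma Qmat_isSymm (hA : A.IsSymm) (α : ℝ) : (Qmat A α).IsSymm :=
  IsSymm.ext fun i j => by
    simp only [Qmat, hA.apply i j, eq_comm (a := j), mul_comm (Real.sqrt (deg A j))]

lemma dotProduct_Qmat_mulVec (α : ℝ) (u : Fin n → ℝ) :
    u ⬝ᵥ (Qmat A α *ᵥ u) = (1 + α) / 2 * (u ⬝ᵥ u)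
      - (1 - α) / 2 * ∑ i, ∑ j, A i j * (u i / √(deg A i)) * (u j / √(deg A j)) := by
  simp only [dotProduct, mulVec, Qmat, sub_mul, mul_sub, Finset.sum_sub_distrib, ite_mul,
    zero_mul, Finset.sum_ite_eq, Finset.mem_univ, if_true, Finset.mul_sum]
  congr 1
  · exact Finset.sum_congr rfl fun i _ => by ring
  · refine Finset.sum_congr rfl fun i _ => Finset.sum_congr rfl fun j _ => ?_
    field_simp

lemma sum_adj_mul_le (hA : A.IsSymm) (hnn : ∀ i j, 0 ≤ A i j) (a : Fin n → ℝ) :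
    ∑ i, ∑ j, A i j * a i * a j ≤ ∑ i, deg A i * a i ^ 2 := by
  have hrow : ∑ i, ∑ j, A i j * a i ^ 2 = ∑ i, deg A i * a i ^ 2 := by
    simp only [deg, Finset.sum_mul]
  have hcol : ∑ i, ∑ j, A i j * a j ^ 2 = ∑ i, deg A i * a i ^ 2 := by
    rw [Finset.sum_comm, ← hrow]
    simp only [hA.apply]
  have hsq : 0 ≤ ∑ i, ∑ j, A i j * (a i - a j) ^ 2 :=
    Finset.sum_nonneg fun i _ => Finset.sum_nonneg fun j _ =>
      mul_nonneg (hnn i j) (sq_nonneg _)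
  have hexp : ∑ i, ∑ j, A i j * (a i - a j) ^ 2 = ∑ i, ∑ j, A i j * a i ^ 2
      + ∑ i, ∑ j, A i j * a j ^ 2 - 2 * ∑ i, ∑ j, A i j * a i * a j := by
    simp only [Finset.mul_sum, ← Finset.sum_add_distrib, ← Finset.sum_sub_distrib]
    exact Finset.sum_congr rfl fun i _ => Finset.sum_congr rfl fun j _ => by ring
  linarith

lemma mul_dotProduct_self_le_dotProduct_Qmat_mulVec (hA : A.IsSymm) (hnn : ∀ i j, 0 ≤ A i j)
    (hdeg : ∀ i, 0 < deg A i) (hα1 : α ≤ 1) (u : Fin n → ℝ) :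
    α * (u ⬝ᵥ u) ≤ u ⬝ᵥ (Qmat A α *ᵥ u) := by
  have hle := sum_adj_mul_le hA hnn fun i => u i / √(deg A i)
  have hdu : ∑ i, deg A i * (u i / √(deg A i)) ^ 2 = u ⬝ᵥ u := by
    refine Finset.sum_congr rfl fun i _ => ?_
    rw [div_pow, Real.sq_sqrt (hdeg i).le, mul_div_cancel₀ _ (hdeg i).ne', sq]
  rw [hdu] at hle
  rw [dotProduct_Qmat_mulVec]
  nlinarith [mul_le_mul_of_nonneg_left hle (by linarith : 0 ≤ (1 - α) / 2)]

lemma fPR_eq_dotProduct (x : Fin n → ℝ) :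
    fPR A α v x = 1 / 2 * (x ⬝ᵥ (Qmat A α *ᵥ x)) - α * (x v / √(deg A v)) := rfl

lemma gradf_dotProduct (x w : Fin n → ℝ) :
    gradf A α v x ⬝ᵥ w = (Qmat A α *ᵥ x) ⬝ᵥ w - α * (w v / √(deg A v)) := by
  simp only [gradf, dotProduct, sub_mul, Finset.sum_sub_distrib, mul_ite, mul_zero, ite_mul,
    zero_mul, Finset.sum_ite_eq', Finset.mem_univ, if_true]
  ring

lemma fPR_eq_add (hA : A.IsSymm) (x z : Fin n → ℝ) :
    fPR A α v z = fPR A α v x + gradf A α v x ⬝ᵥ (z - x)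
      + 1 / 2 * ((z - x) ⬝ᵥ (Qmat A α *ᵥ (z - x))) := by
  obtain ⟨w, rfl⟩ : ∃ w, z = x + w := ⟨z - x, by abel⟩
  have hcross : x ⬝ᵥ (Qmat A α *ᵥ w) = (Qmat A α *ᵥ x) ⬝ᵥ w := by
    rw [dotProduct_mulVec, ← mulVec_transpose, (Qmat_isSymm hA α).eq]
  rw [add_sub_cancel_left, fPR_eq_dotProduct, fPR_eq_dotProduct, gradf_dotProduct, mulVec_add,
    dotProduct_add, add_dotProduct, add_dotProduct, hcross, dotProduct_comm w (Qmat A α *ᵥ x),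
    Pi.add_apply]
  ring

/-- `hkkt` is the KKT condition in variational form: coordinatewise it says
`-∇ᵢf(x) ∈ αρ√dᵢ · ∂|·|(xᵢ)`. -/
lemma Freg_add_le_of_kkt (hA : A.IsSymm) (hnn : ∀ i j, 0 ≤ A i j) (hdeg : ∀ i, 0 < deg A i)
    (hα1 : α ≤ 1) {x : Fin n → ℝ}
    (hkkt : ∀ i t, 0 ≤ gradf A α v x i * (t - x i) + α * ρ * √(deg A i) * (|t| - |x i|))
    (z : Fin n → ℝ) :
    Freg A α v ρ x + α / 2 * ((z - x) ⬝ᵥ (z - x)) ≤ Freg A α v ρ z := by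
  have hlin : 0 ≤ gradf A α v x ⬝ᵥ (z - x) + α * ρ * (l1w A z - l1w A x) := by
    have hsum : gradf A α v x ⬝ᵥ (z - x) + α * ρ * (l1w A z - l1w A x)
        = ∑ i, (gradf A α v x i * (z i - x i) + α * ρ * √(deg A i) * (|z i| - |x i|)) := by
      simp only [dotProduct, l1w, Pi.sub_apply, Finset.mul_sum, ← Finset.sum_sub_distrib,
        ← Finset.sum_add_distrib]
      exact Finset.sum_congr rfl fun i _ => by ring
    exact hsum ▸ Finset.sum_nonneg fun i _ => hkkt i (z i)
  have hquad := mul_dotProduct_self_le_dotProduct_Qmat_mulVec hA hnn hdeg hα1 (z - x)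
  rw [Freg, Freg, fPR_eq_add hA x z]
  linarith

lemma eq_of_forall_Freg_le_of_kkt (hα : 0 < α) (hA : A.IsSymm) (hnn : ∀ i j, 0 ≤ A i j)
    (hdeg : ∀ i, 0 < deg A i) (hα1 : α ≤ 1) {x xs : Fin n → ℝ}
    (hkkt : ∀ i t, 0 ≤ gradf A α v x i * (t - x i) + α * ρ * √(deg A i) * (|t| - |x i|))
    (hmin : ∀ z, Freg A α v ρ xs ≤ Freg A α v ρ z) : xs = x := by
  have hgrowth := Freg_add_le_of_kkt hA hnn hdeg hα1 hkkt xs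
  have hnonneg : 0 ≤ (xs - x) ⬝ᵥ (xs - x) := Finset.sum_nonneg fun i _ => mul_self_nonneg _
  have hzero : (xs - x) ⬝ᵥ (xs - x) = 0 := by nlinarith [hmin x]
  exact sub_eq_zero.mp (dotProduct_self_eq_zero.mp hzero)

end Objective

lemma abs_subgradient_of_pos {g l x t : ℝ} (hl : 0 ≤ l) (hx : 0 < x) (hg : g = -l) :
    0 ≤ g * (t - x) + l * (|t| - |x|) := by
  rw [hg, abs_of_pos hx]
  nlinarith [le_abs_self t]

lemma abs_subgradient_of_zero {g l t : ℝ} (hg : |g| ≤ l) : 0 ≤ g * (t - 0) + l * (|t| - |0|) := by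
  rw [sub_zero, abs_zero, sub_zero]
  nlinarith [neg_abs_le (g * t), abs_mul g t, abs_nonneg t]

section Path

variable {m : ℕ}

lemma deg_pathA (i : Fin (m + 1)) :
    deg (pathA m) i = (if (i : ℕ) < m then 1 else 0) + (if 0 < (i : ℕ) then 1 else 0) := by
  have hsplit : ∀ j : Fin (m + 1), pathA m i j
      = (if (i : ℕ) + 1 = j then 1 else 0) + (if (j : ℕ) + 1 = i then 1 else 0) := by
    intro j; unfold pathA; split_ifs <;> (try norm_num) <;> omega
  simp only [deg, hsplit, Finset.sum_add_distrib,
    Fin.sum_univ_eq_sum_range (fun j => if (i : ℕ) + 1 = j then (1 : ℝ) else 0),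
    Fin.sum_univ_eq_sum_range (fun j => if j + 1 = (i : ℕ) then (1 : ℝ) else 0),
    Finset.sum_ite_eq, Finset.mem_range]
  congr 1
  · simp
  · obtain ⟨i, hi⟩ := i
    cases i with
    | zero => simp
    | succ k => simp [Finset.sum_ite_eq', show k < m + 1 by omega]

lemma pathA_isSymm (m : ℕ) : (pathA m).IsSymm :=
  IsSymm.ext fun _ _ => if_congr or_comm rfl rfl

lemma pathA_nonneg (i j : Fin (m + 1)) : 0 ≤ pathA m i j := by
  unfold pathA; split_ifs <;> norm_num

lemma deg_pathA_pos (hm : 1 ≤ m) (i : Fin (m + 1)) : 0 < deg (pathA m) i := by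
  rw [deg_pathA]; split_ifs <;> first | positivity | omega

lemma deg_pathA_zero (hm : 1 ≤ m) : deg (pathA m) 0 = 1 := by
  simp [deg_pathA, Nat.pos_of_ne_zero (by omega : m ≠ 0)]

lemma val_one_of_one_le (hm : 1 ≤ m) : ((1 : Fin (m + 1)) : ℕ) = 1 := by
  rw [Fin.val_one', Nat.mod_eq_of_lt (by omega)]

lemma deg_pathA_one (hm : 2 ≤ m) : deg (pathA m) 1 = 2 := by
  rw [deg_pathA, val_one_of_one_le (by omega), if_pos (by omega), if_pos one_pos]
  norm_num

lemma pathA_apply_zero_right (i : Fin (m + 1)) : pathA m i 0 = if (i : ℕ) = 1 then 1 else 0 := by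
  unfold pathA
  exact if_congr (by simp only [Fin.val_zero]; omega) rfl rfl

lemma gradf_single {n : ℕ} (A : Matrix (Fin n) (Fin n) ℝ) (α : ℝ) (v : Fin n) (c : ℝ)
    (i : Fin n) :
    gradf A α v (Pi.single v c) i
      = Qmat A α i v * c - α * (if i = v then 1 / √(deg A v) else 0) := by
  simp [gradf, mulVec_single]

lemma gradf_pathA_single_zero (hm : 1 ≤ m) (α c : ℝ) :
    gradf (pathA m) α 0 (Pi.single 0 c) 0 = (1 + α) / 2 * c - α := by
  rw [gradf_single, Qmat, pathA_apply_zero_right, deg_pathA_zero hm]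
  simp

lemma gradf_pathA_single_one (hm : 2 ≤ m) (α c : ℝ) :
    gradf (pathA m) α 0 (Pi.single 0 c) 1 = -((1 - α) / (2 * √2) * c) := by
  have h1 : ((1 : Fin (m + 1)) : ℕ) = 1 := val_one_of_one_le (by omega)
  have h10 : (1 : Fin (m + 1)) ≠ 0 := Fin.ne_of_val_ne (by rw [h1, Fin.val_zero]; omega)
  rw [gradf_single, Qmat, pathA_apply_zero_right, h1, deg_pathA_one hm, deg_pathA_zero (by omega)]
  simp only [if_neg h10, if_true]
  ring

lemma gradf_pathA_single_of_ne (α c : ℝ) {i : Fin (m + 1)} (hi0 : i ≠ 0) (hi1 : (i : ℕ) ≠ 1) :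
    gradf (pathA m) α 0 (Pi.single 0 c) i = 0 := by
  rw [gradf_single, Qmat, pathA_apply_zero_right]
  simp [hi0, hi1]

end Path

def pathMinimizer (m : ℕ) (α ρ : ℝ) : Fin (m + 1) → ℝ :=
  Pi.single 0 (2 * α * (1 - ρ) / (1 + α))

section PathMinimizer

variable {m : ℕ} {α ρ : ℝ}

lemma pathMinimizer_apply_zero_pos (hα : 0 < α) (hρ1 : ρ < 1) : 0 < pathMinimizer m α ρ 0 := by
  rw [pathMinimizer, Pi.single_eq_same]
  exact div_pos (by nlinarith) (by linarith)

lemma support_pathMinimizer (hα : 0 < α) (hρ1 : ρ < 1) :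
    Function.support (pathMinimizer m α ρ) = {0} := by
  have hc := (pathMinimizer_apply_zero_pos (m := m) hα hρ1).ne'
  rw [pathMinimizer, Pi.single_eq_same] at hc
  exact Pi.support_single_of_ne hc

lemma pathMinimizer_slack (hm : 2 ≤ m) (hα : 0 < α) (hα1 : α ≤ 1) (hρ1 : ρ ≤ 1) :
    (α * ρ * √2 - |gradf (pathA m) α 0 (pathMinimizer m α ρ) 1|) / √2
      = α * (3 + α) / (2 * (1 + α)) * (ρ - (1 - α) / (3 + α)) := by
  have hs2 : √2 ^ 2 = 2 := Real.sq_sqrt zero_le_two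
  have hs : 0 < √2 := by positivity
  have hc : 0 ≤ 2 * α * (1 - ρ) / (1 + α) := div_nonneg (by nlinarith) (by linarith)
  rw [pathMinimizer, gradf_pathA_single_one hm, abs_neg,
    abs_of_nonneg (mul_nonneg (div_nonneg (by linarith) (by positivity)) hc)]
  field_simp
  linear_combination (1 - ρ) * (1 - α) * hs2

lemma pathMinimizer_kkt (hm : 2 ≤ m) (hα : 0 < α) (hα1 : α ≤ 1) (hρ : 0 ≤ ρ) (hρ1 : ρ < 1)
    (hρ₀ : (1 - α) / (3 + α) ≤ ρ) (i : Fin (m + 1)) (t : ℝ) :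
    0 ≤ gradf (pathA m) α 0 (pathMinimizer m α ρ) i * (t - pathMinimizer m α ρ i)
      + α * ρ * √(deg (pathA m) i) * (|t| - |pathMinimizer m α ρ i|) := by
  obtain rfl | hi0 := eq_or_ne i 0
  · rw [deg_pathA_zero (by omega), Real.sqrt_one]
    refine abs_subgradient_of_pos (by positivity) (pathMinimizer_apply_zero_pos hα hρ1) ?_
    rw [pathMinimizer, gradf_pathA_single_zero (by omega)]
    field_simp
    ring
  rw [pathMinimizer, Pi.single_eq_of_ne hi0, ← pathMinimizer]
  refine abs_subgradient_of_zero ?_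
  by_cases hi1 : (i : ℕ) = 1
  · obtain rfl : i = 1 := Fin.ext (hi1.trans (val_one_of_one_le (by omega)).symm)
    have hslack : 0 ≤ (α * ρ * √2 - |gradf (pathA m) α 0 (pathMinimizer m α ρ) 1|) / √2 := by
      rw [pathMinimizer_slack hm hα hα1 hρ1.le]
      exact mul_nonneg (by positivity) (by linarith)
    rw [deg_pathA_one hm]
    have := mul_nonneg hslack (Real.sqrt_nonneg 2)
    rwa [div_mul_cancel₀ _ (by positivity), sub_nonneg] at this
  · rw [pathMinimizer, gradf_pathA_single_of_ne α _ hi0 hi1, abs_zero]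
    positivity

end PathMinimizer

/-- Path-graph breakpoint: for the path on `m+1 ≥ 3` vertices with seed at
endpoint `0` (paper's vertex 1), `α ∈ (0,1]`, `ρ₀ = (1−α)/(3+α)`, and `ρ` with
`max(ρ₀,0) < ρ < 1` or `ρ = ρ₀ > 0` (equivalently `0 < ρ`, `ρ₀ ≤ ρ < 1`), the unique
minimizer `x⋆` of `F_ρ` has support `{0}` with `x⋆_0 = 2α(1−ρ)/(1+α)`, and the
degree-normalized KKT slack at the second vertex (index `1`, degree `2`, `λ = αρ√2`) equals
`γ₂ = (αρ√2 − |∇_1 f(x⋆)|)/√2 = (α(3+α)/(2(1+α)))·(ρ − ρ₀)`; in particular at `ρ = ρ₀`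
this slack is `0`. -/
theorem path_graph_breakpoint
    (m : ℕ) (hm : 2 ≤ m)
    (α ρ ρ₀ : ℝ) (hα : 0 < α) (hα1 : α ≤ 1)
    (hρ₀ : ρ₀ = (1 - α) / (3 + α))
    (hρpos : 0 < ρ) (hρlb : ρ₀ ≤ ρ) (hρub : ρ < 1)
    (xs : Fin (m + 1) → ℝ)
    (hxs : ∀ z, Freg (pathA m) α 0 ρ xs ≤ Freg (pathA m) α 0 ρ z) :
    Function.support xs = {0} ∧
    xs 0 = 2 * α * (1 - ρ) / (1 + α) ∧
    (α * ρ * Real.sqrt 2 - |gradf (pathA m) α 0 xs 1|) / Real.sqrt 2 =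
      α * (3 + α) / (2 * (1 + α)) * (ρ - ρ₀) ∧
    (ρ = ρ₀ →
      (α * ρ * Real.sqrt 2 - |gradf (pathA m) α 0 xs 1|) / Real.sqrt 2 = 0) := by
  have hsol : xs = pathMinimizer m α ρ :=
    eq_of_forall_Freg_le_of_kkt hα (pathA_isSymm m) pathA_nonneg (deg_pathA_pos (by omega)) hα1
      (pathMinimizer_kkt hm hα hα1 hρpos.le hρub (hρ₀ ▸ hρlb)) hxs
  have hslack := pathMinimizer_slack hm hα hα1 hρub.le
  subst hsol hρ₀
  exact ⟨support_pathMinimizer hα hρub, Pi.single_eq_same _ _, hslack,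
    fun h => by rw [hslack, h, sub_self, mul_zero]⟩
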